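/- Let V be a real Hilbert space, Vₙ and W finite-dimensional subspaces with β(Vₙ, W) > 0. The PBDW map A : W → V, sending ω to the unique minimizer over ω + W⊥ of the distance to Vₙ, is a bounded linear map, and its range is contained in Vₙ ⊕ (W ∩ Vₙ⊥). -/

import Mathlib

/-!
Write `Q` for the orthogonal projection onto `Vnᗮ`, so that `dist(x, Vn) = ‖Q x‖`. Perturbing a
minimiser `u ∈ ω + Wᗮ` along `z ∈ Wᗮ` shows `⟪Q u, z⟫ = 0`, i.e. `Q u ∈ W`. Conversely a vector
`d ∈ Wᗮ` with `Q d ∈ W` has `‖Q d‖² = ⟪Q d, d⟫ = 0`, so `d ∈ Vn ⊓ Wᗮ`, which `β > 0` forces to be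
zero. Hence `A ω` is the only point of `ω + Wᗮ` with `Q (A ω) ∈ W`, which makes `A` linear, and
`A ω = P_Vn (A ω) + Q (A ω)` lies in `Vn ⊔ (W ⊓ Vnᗮ)`.
-/

open RealInnerProductSpace Metric

section LinearAlgebra

variable {R M E : Type*} [Ring R] [AddCommGroup M] [Module R M] [AddCommGroup E] [Module R E]

theorem isLinearMap_of_mem_of_sub_mem {S T : Submodule R E} (hST : Disjoint S T)
    (g : M →ₗ[R] E) {f : M → E} (hS : ∀ x, f x ∈ S) (hT : ∀ x, f x - g x ∈ T) :
    IsLinearMap R f := by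
  have eq_of_mem {u v : E} (hS' : u - v ∈ S) (hT' : u - v ∈ T) : u = v :=
    sub_eq_zero.1 (Submodule.disjoint_def.1 hST _ hS' hT')
  refine ⟨fun x y ↦ eq_of_mem (S.sub_mem (hS _) (S.add_mem (hS x) (hS y))) ?_,
    fun c x ↦ eq_of_mem (S.sub_mem (hS _) (S.smul_mem c (hS x))) ?_⟩
  · convert T.sub_mem (hT (x + y)) (T.add_mem (hT x) (hT y)) using 1
    simp only [map_add]; abel
  · convert T.sub_mem (hT (c • x)) (T.smul_mem c (hT x)) using 1
    simp only [map_smul, smul_sub]; abel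

end LinearAlgebra

section InnerProductSpace

variable {V : Type*} [NormedAddCommGroup V] [InnerProductSpace ℝ V]

theorem real_inner_eq_zero_of_forall_norm_le_norm_add_smul {a b : V}
    (h : ∀ t : ℝ, ‖a‖ ≤ ‖a + t • b‖) : ⟪a, b⟫ = 0 := by
  have hquad (t : ℝ) : 0 ≤ t * (2 * ⟪a, b⟫ + t * ‖b‖ ^ 2) := by
    have := pow_le_pow_left₀ (norm_nonneg a) (h t) 2
    rw [norm_add_sq_real, real_inner_smul_right, norm_smul, Real.norm_eq_abs, mul_pow,
      sq_abs] at this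
    linarith
  have hB : 0 < ‖b‖ ^ 2 + 1 := by positivity
  have h := hquad (-⟪a, b⟫ / (‖b‖ ^ 2 + 1))
  have hval : -⟪a, b⟫ / (‖b‖ ^ 2 + 1) * (2 * ⟪a, b⟫ + -⟪a, b⟫ / (‖b‖ ^ 2 + 1) * ‖b‖ ^ 2)
      = -(⟪a, b⟫ ^ 2 * (‖b‖ ^ 2 + 2)) / (‖b‖ ^ 2 + 1) ^ 2 := by
    field_simp; ring
  rw [hval, le_div_iff₀ (by positivity)] at h
  nlinarith [sq_nonneg ⟪a, b⟫]

namespace Submodule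

variable (K : Submodule ℝ V) [K.HasOrthogonalProjection]

theorem infDist_eq_norm_starProjection_orthogonal (x : V) :
    infDist x K = ‖Kᗮ.starProjection x‖ := by
  rw [infDist_eq_iInf, starProjection_orthogonal_val, starProjection_minimal]
  simp only [dist_eq_norm]; rfl

theorem starProjection_orthogonal_mem_orthogonal_of_forall_infDist_le {L : Submodule ℝ V}
    {u : V} (hmin : ∀ z ∈ L, infDist u K ≤ infDist (u + z) K) :
    Kᗮ.starProjection u ∈ Lᗮ := by
  refine (mem_orthogonal' _ _).2 fun z hz ↦ ?_
  have hQz : ⟪Kᗮ.starProjection u, Kᗮ.starProjection z⟫ = 0 := by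
    refine real_inner_eq_zero_of_forall_norm_le_norm_add_smul fun t ↦ ?_
    simpa only [infDist_eq_norm_starProjection_orthogonal, map_add, map_smul] using
      hmin (t • z) (L.smul_mem t hz)
  rwa [← inner_starProjection_left_eq_right,
    starProjection_eq_self_iff.2 (Kᗮ.starProjection_apply_mem u)] at hQz

theorem disjoint_comap_starProjection_orthogonal {L : Submodule ℝ V} (hKL : Disjoint K L) :
    Disjoint (Lᗮ.comap (Kᗮ.starProjection : V →ₗ[ℝ] V)) L := by
  refine disjoint_def.2 fun d hQd hd ↦ disjoint_def.1 hKL d ?_ hd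
  have hQ : Kᗮ.starProjection d = 0 := by
    rw [← inner_self_eq_zero (𝕜 := ℝ), inner_starProjection_left_eq_right,
      starProjection_eq_self_iff.2 (Kᗮ.starProjection_apply_mem d)]
    exact hQd d hd
  rw [← K.starProjection_add_starProjection_orthogonal d, hQ, add_zero]
  exact starProjection_apply_mem K d

end Submodule

theorem disjoint_orthogonal_of_pos_iInf {Vn W : Submodule ℝ V} [W.HasOrthogonalProjection]
    (hβ : 0 < ⨅ v : {v : Vn // v ≠ 0},
        ‖(W.orthogonalProjectionOnto ((v : Vn) : V) : V)‖ / ‖((v : Vn) : V)‖) :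
    Disjoint Vn Wᗮ := by
  refine Submodule.disjoint_def.2 fun d hdVn hdW ↦ by_contra fun hd ↦ hβ.not_ge ?_
  refine (ciInf_le ⟨0, ?_⟩ ⟨⟨d, hdVn⟩, by simpa using hd⟩).trans_eq ?_
  · rintro _ ⟨v, rfl⟩; positivity
  · simp [Submodule.orthogonalProjectionOnto_eq_zero_iff.2 hdW]

end InnerProductSpace

theorem pbdw_bounded_linear_general
    {V : Type*} [NormedAddCommGroup V] [InnerProductSpace ℝ V]
    (Vn W : Submodule ℝ V) [FiniteDimensional ℝ Vn] [FiniteDimensional ℝ W]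
    (hβ : 0 < ⨅ v : {v : Vn // v ≠ 0},
        ‖(W.orthogonalProjection ((v : Vn) : V) : V)‖ / ‖((v : Vn) : V)‖)
    (A : W → V)
    (hA : ∀ ω : W, (A ω - (ω : V) ∈ Wᗮ) ∧
      ∀ x : V, x - (ω : V) ∈ Wᗮ →
        Metric.infDist (A ω) (Vn : Set V) ≤ Metric.infDist x (Vn : Set V)) :
    (∃ B : W →L[ℝ] V, ∀ ω : W, B ω = A ω) ∧
      ∀ ω : W, A ω ∈ (Vn ⊔ (W ⊓ Vnᗮ) : Submodule ℝ V) := by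
  have hres (ω : W) : Vnᗮ.starProjection (A ω) ∈ Wᗮᗮ :=
    Vn.starProjection_orthogonal_mem_orthogonal_of_forall_infDist_le fun z hz ↦
      (hA ω).2 _ (by simpa only [add_sub_right_comm] using Wᗮ.add_mem (hA ω).1 hz)
  have hlin : IsLinearMap ℝ A := isLinearMap_of_mem_of_sub_mem
    (Vn.disjoint_comap_starProjection_orthogonal (disjoint_orthogonal_of_pos_iInf hβ))
    W.subtype hres fun ω ↦ (hA ω).1
  refine ⟨⟨LinearMap.toContinuousLinearMap (hlin.mk' A), fun _ ↦ rfl⟩, fun ω ↦ ?_⟩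
  rw [← Vn.starProjection_add_starProjection_orthogonal (A ω)]
  exact Submodule.add_mem_sup (Vn.starProjection_apply_mem _)
    ⟨W.orthogonal_orthogonal ▸ hres ω, Vnᗮ.starProjection_apply_mem _⟩

theorem pbdw_bounded_linear
    {V : Type*} [NormedAddCommGroup V] [InnerProductSpace ℝ V] [CompleteSpace V]
    (Vn W : Submodule ℝ V) [FiniteDimensional ℝ Vn] [FiniteDimensional ℝ W]
    (hβ : 0 < ⨅ v : {v : Vn // v ≠ 0},
        ‖(W.orthogonalProjection ((v : Vn) : V) : V)‖ / ‖((v : Vn) : V)‖)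
    (A : W → V)
    (hA : ∀ ω : W, (A ω - (ω : V) ∈ Wᗮ) ∧
      ∀ x : V, x - (ω : V) ∈ Wᗮ →
        Metric.infDist (A ω) (Vn : Set V) ≤ Metric.infDist x (Vn : Set V)) :
    (∃ B : W →L[ℝ] V, ∀ ω : W, B ω = A ω) ∧
      ∀ ω : W, A ω ∈ (Vn ⊔ (W ⊓ Vnᗮ) : Submodule ℝ V) :=
  pbdw_bounded_linear_general Vn W hβ A hA
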